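/- arXiv:2012.06744 — 2 statements merged into one kernel-verified Lean document; each statement's English description precedes it below -/
import Mathlib

section
/- For q(t) = exp(iθ₁(t))·exp(jθ₂(t))·exp(kθ₃(t)) with differentiable real functions θ₁, θ₂, θ₃, the product q'(t)·q̄(t) equals the pure quaternion (θ₁' + θ₃'·sin(2θ₂))i + (θ₂'·cos(2θ₁) − θ₃'·sin(2θ₁)cos(2θ₂))j + (θ₂'·sin(2θ₁) + θ₃'·cos(2θ₁)cos(2θ₂))k. -/
noncomputable def qi : Quaternion ℝ := ⟨0, 1, 0, 0⟩
noncomputable def qj : Quaternion ℝ := ⟨0, 0, 1, 0⟩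
noncomputable def qk : Quaternion ℝ := ⟨0, 0, 0, 1⟩

/-- `exp(i θ) = cos θ + i sin θ`. -/
noncomputable def expI (θ : ℝ) : Quaternion ℝ := ⟨Real.cos θ, Real.sin θ, 0, 0⟩
/-- `exp(j θ) = cos θ + j sin θ`. -/
noncomputable def expJ (θ : ℝ) : Quaternion ℝ := ⟨Real.cos θ, 0, Real.sin θ, 0⟩
/-- `exp(k θ) = cos θ + k sin θ`. -/
noncomputable def expK (θ : ℝ) : Quaternion ℝ := ⟨Real.cos θ, 0, 0, Real.sin θ⟩

/-!
Write `q = a b c` with `a = exp(iθ₁)`, `b = exp(jθ₂)`, `c = exp(kθ₃)`. Each factor is unitary and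
`a' = θ₁' i a`, `b' = θ₂' j b`, `c' = θ₃' k c`, so the product rule gives
`q' q̄ = θ₁' i + θ₂' a j ā + θ₃' a (b k b̄) ā`. Conjugation by `exp(uθ)` is the rotation by `2θ`
about `u`: it fixes `u` and sends a `v` anticommuting with `u` to `cos 2θ v + sin 2θ uv`.
Evaluating the three conjugations gives the formula.
-/

open scoped Quaternion

/-- With `a' = x a`, `b' = y b`, `c' = z c`, this is the product rule for the right logarithmic
derivative `(abc)' (abc)⁻¹` of a product of unitaries. -/
lemma leibniz_mul_star_of_mul_star_self {R : Type*} [Semiring R] [StarRing R] {a b c x y z : R}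
    (ha : a * star a = 1) (hb : b * star b = 1) (hc : c * star c = 1) :
    ((x * a * b + a * (y * b)) * c + a * b * (z * c)) * star (a * b * c) =
      x + a * y * star a + a * (b * z * star b) * star a := by
  have cancel {d : R} (hd : d * star d = 1) (w : R) : d * (star d * w) = w := by
    rw [← mul_assoc, hd, one_mul]
  simp only [star_mul, add_mul, mul_assoc, cancel hb, cancel hc, mul_one, ha]

noncomputable def expAxis (u : ℍ[ℝ]) (θ : ℝ) : ℍ[ℝ] := Real.cos θ • 1 + Real.sin θ • u

namespace expAxis

variable {u : ℍ[ℝ]}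

lemma commute_self (θ : ℝ) : Commute u (expAxis u θ) :=
  ((Commute.one_right u).smul_right _).add_right ((Commute.refl u).smul_right _)

lemma mul_star_self (hu : u * u = -1) (hstar : star u = -u) (θ : ℝ) :
    expAxis u θ * star (expAxis u θ) = 1 := calc
  expAxis u θ * star (expAxis u θ) = (Real.cos θ ^ 2 + Real.sin θ ^ 2) • (1 : ℍ[ℝ]) := by
    simp only [expAxis, star_add, Quaternion.star_smul, star_one, hstar, add_mul, mul_add,
      smul_mul_smul_comm, one_mul, mul_one, mul_neg, hu]
    module
  _ = 1 := by rw [Real.cos_sq_add_sin_sq, one_smul]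

lemma hasDerivAt_comp (hu : u * u = -1) {θ : ℝ → ℝ} {θ' t : ℝ} (h : HasDerivAt θ θ' t) :
    HasDerivAt (fun s => expAxis u (θ s)) ((θ' • u) * expAxis u (θ t)) t := by
  refine ((h.cos.smul_const (1 : ℍ[ℝ])).add (h.sin.smul_const u)).congr_deriv ?_
  simp only [expAxis, mul_add, smul_mul_smul_comm, mul_one, hu]
  module

lemma conj_eq_of_anticomm (hu : u * u = -1) (hstar : star u = -u) {v : ℍ[ℝ]}
    (hvu : v * u = -(u * v)) (θ : ℝ) :
    expAxis u θ * v * star (expAxis u θ) = Real.cos (2 * θ) • v + Real.sin (2 * θ) • (u * v) := by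
  have huvu : u * v * u = v := by
    rw [mul_assoc, hvu, mul_neg, ← mul_assoc, hu, neg_one_mul, neg_neg]
  calc
    expAxis u θ * v * star (expAxis u θ)
        = (Real.cos θ ^ 2 - Real.sin θ ^ 2) • v + (2 * Real.sin θ * Real.cos θ) • (u * v) := by
      simp only [expAxis, star_add, Quaternion.star_smul, star_one, hstar, add_mul, mul_add,
        smul_mul_assoc, mul_smul_comm, one_mul, mul_one, mul_neg, hvu, huvu]
      module
    _ = _ := by rw [Real.cos_two_mul', Real.sin_two_mul]

lemma conj_self (hu : u * u = -1) (hstar : star u = -u) (θ : ℝ) :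
    expAxis u θ * u * star (expAxis u θ) = u := by
  rw [← (commute_self θ).eq, mul_assoc, mul_star_self hu hstar, mul_one]

end expAxis

lemma expI_eq_expAxis : expI = expAxis qi := by
  funext θ; ext <;> simp [expAxis] <;> simp [expI, qi]

lemma expJ_eq_expAxis : expJ = expAxis qj := by
  funext θ; ext <;> simp [expAxis] <;> simp [expJ, qj]

lemma expK_eq_expAxis : expK = expAxis qk := by
  funext θ; ext <;> simp [expAxis] <;> simp [expK, qk]

section basis

open Quaternion

lemma qi_mul_qi : qi * qi = -1 := by
  simp [Quaternion.ext_iff, re_mul, imI_mul, imJ_mul, imK_mul]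
  simp [qi]

lemma qj_mul_qj : qj * qj = -1 := by
  simp [Quaternion.ext_iff, re_mul, imI_mul, imJ_mul, imK_mul]
  simp [qj]

lemma qk_mul_qk : qk * qk = -1 := by
  simp [Quaternion.ext_iff, re_mul, imI_mul, imJ_mul, imK_mul]
  simp [qk]

lemma star_qi : star qi = -qi := star_eq_neg.2 rfl

lemma star_qj : star qj = -qj := star_eq_neg.2 rfl

lemma star_qk : star qk = -qk := star_eq_neg.2 rfl

lemma qi_mul_qj : qi * qj = qk := by
  simp [Quaternion.ext_iff, re_mul, imI_mul, imJ_mul, imK_mul]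
  simp [qi, qj, qk]

lemma qj_mul_qk : qj * qk = qi := by
  simp [Quaternion.ext_iff, re_mul, imI_mul, imJ_mul, imK_mul]
  simp [qi, qj, qk]

lemma qi_mul_qk : qi * qk = -qj := by
  simp [Quaternion.ext_iff, re_mul, imI_mul, imJ_mul, imK_mul]
  simp [qi, qj, qk]

lemma qj_mul_qi : qj * qi = -(qi * qj) := by
  simp [Quaternion.ext_iff, re_mul, imI_mul, imJ_mul, imK_mul]
  simp [qi, qj]

lemma qk_mul_qj : qk * qj = -(qj * qk) := by
  simp [Quaternion.ext_iff, re_mul, imI_mul, imJ_mul, imK_mul]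
  simp [qj, qk]

lemma qk_mul_qi : qk * qi = -(qi * qk) := by
  simp [Quaternion.ext_iff, re_mul, imI_mul, imJ_mul, imK_mul]
  simp [qi, qk]

end basis

theorem deriv_mul_conj_phase_formula
    (θ₁ θ₂ θ₃ θ₁' θ₂' θ₃' : ℝ → ℝ)
    (h₁ : ∀ t, HasDerivAt θ₁ (θ₁' t) t)
    (h₂ : ∀ t, HasDerivAt θ₂ (θ₂' t) t)
    (h₃ : ∀ t, HasDerivAt θ₃ (θ₃' t) t)
    (dq : ℝ → Quaternion ℝ)
    (hdq : ∀ t, HasDerivAt (fun s => expI (θ₁ s) * expJ (θ₂ s) * expK (θ₃ s)) (dq t) t) :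
    ∀ t, dq t * star (expI (θ₁ t) * expJ (θ₂ t) * expK (θ₃ t)) =
      (θ₁' t + θ₃' t * Real.sin (2 * θ₂ t)) • qi +
        (θ₂' t * Real.cos (2 * θ₁ t) -
          θ₃' t * Real.sin (2 * θ₁ t) * Real.cos (2 * θ₂ t)) • qj +
        (θ₂' t * Real.sin (2 * θ₁ t) +
          θ₃' t * Real.cos (2 * θ₁ t) * Real.cos (2 * θ₂ t)) • qk := by
  intro t
  rw [expI_eq_expAxis, expJ_eq_expAxis, expK_eq_expAxis] at hdq ⊢
  have hq := ((expAxis.hasDerivAt_comp qi_mul_qi (h₁ t)).mul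
    (expAxis.hasDerivAt_comp qj_mul_qj (h₂ t))).mul (expAxis.hasDerivAt_comp qk_mul_qk (h₃ t))
  rw [(hdq t).unique hq, Pi.mul_apply,
    leibniz_mul_star_of_mul_star_self (expAxis.mul_star_self qi_mul_qi star_qi _)
      (expAxis.mul_star_self qj_mul_qj star_qj _) (expAxis.mul_star_self qk_mul_qk star_qk _)]
  simp only [mul_smul_comm, smul_mul_assoc]
  rw [expAxis.conj_eq_of_anticomm qj_mul_qj star_qj qk_mul_qj]
  simp only [mul_add, add_mul, mul_smul_comm, smul_mul_assoc]
  rw [expAxis.conj_eq_of_anticomm qi_mul_qi star_qi qj_mul_qi,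
    expAxis.conj_eq_of_anticomm qi_mul_qi star_qi qk_mul_qi, qj_mul_qk,
    expAxis.conj_self qi_mul_qi star_qi, qi_mul_qj, qi_mul_qk]
  module
end

section
/- Let a₂, a₃ be continuous real functions on an interval containing t₀, set A₂(t) = ∫_{t₀}^t a₂(s) ds, and suppose cos(2A₂(t)) ≠ 0 on the interval and a₁(t) = a₃(t)·tan(2A₂(t)). Then q(t) := exp(j·A₂(t))·exp(k·θ₃(t)), with θ₃(t) = ∫_{t₀}^t a₃(s)/cos(2A₂(s)) ds, satisfies q'(t) = (a₁(t)i + a₂(t)j + a₃(t)k)q(t) and q(t₀) = 1. -/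
/-!
By the product rule, `q = exp(j A₂) exp(k θ₃)` satisfies
`q' = A₂' j q + θ₃' (exp(j A₂) k exp(-j A₂)) q`, and conjugation by `exp(j A₂)` rotates `k` into
`sin(2A₂) i + cos(2A₂) k`. Choosing `θ₃' = a₃ / cos(2A₂)` makes the angular velocity
`a₃ tan(2A₂) i + a₂ j + a₃ k`.
-/

open Real Quaternion

@[simp] lemma qi_components : qi.re = 0 ∧ qi.imI = 1 ∧ qi.imJ = 0 ∧ qi.imK = 0 :=
  ⟨rfl, rfl, rfl, rfl⟩

@[simp] lemma qj_components : qj.re = 0 ∧ qj.imI = 0 ∧ qj.imJ = 1 ∧ qj.imK = 0 :=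
  ⟨rfl, rfl, rfl, rfl⟩

@[simp] lemma qk_components : qk.re = 0 ∧ qk.imI = 0 ∧ qk.imJ = 0 ∧ qk.imK = 1 :=
  ⟨rfl, rfl, rfl, rfl⟩

@[simp] lemma expJ_components (θ : ℝ) :
    (expJ θ).re = cos θ ∧ (expJ θ).imI = 0 ∧ (expJ θ).imJ = sin θ ∧ (expJ θ).imK = 0 :=
  ⟨rfl, rfl, rfl, rfl⟩

@[simp] lemma expK_components (θ : ℝ) :
    (expK θ).re = cos θ ∧ (expK θ).imI = 0 ∧ (expK θ).imJ = 0 ∧ (expK θ).imK = sin θ :=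
  ⟨rfl, rfl, rfl, rfl⟩

@[simp] lemma expJ_zero : expJ 0 = 1 := by ext <;> simp

@[simp] lemma expK_zero : expK 0 = 1 := by ext <;> simp

lemma expJ_eq_cos_add_sin_smul (θ : ℝ) : expJ θ = cos θ • 1 + sin θ • qj := by
  ext <;> simp

lemma expK_eq_cos_add_sin_smul (θ : ℝ) : expK θ = cos θ • 1 + sin θ • qk := by
  ext <;> simp

lemma hasDerivAt_expJ (θ : ℝ) : HasDerivAt expJ (qj * expJ θ) θ := by
  rw [funext expJ_eq_cos_add_sin_smul]
  refine (((hasDerivAt_cos θ).smul_const 1).fun_add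
    ((hasDerivAt_sin θ).smul_const qj)).congr_deriv ?_
  ext <;> simp

lemma hasDerivAt_expK (θ : ℝ) : HasDerivAt expK (qk * expK θ) θ := by
  rw [funext expK_eq_cos_add_sin_smul]
  refine (((hasDerivAt_cos θ).smul_const 1).fun_add
    ((hasDerivAt_sin θ).smul_const qk)).congr_deriv ?_
  ext <;> simp

lemma expJ_mul_qk (θ : ℝ) :
    expJ θ * qk = (sin (2 * θ) • qi + cos (2 * θ) • qk) * expJ θ := by
  ext <;> simp [sin_two_mul, cos_two_mul']
  · linear_combination -sin θ * sin_sq_add_cos_sq θ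
  · linear_combination -cos θ * sin_sq_add_cos_sq θ

lemma hasDerivAt_intervalIntegral_of_continuousOn {E : Type*} [NormedAddCommGroup E]
    [NormedSpace ℝ E] [CompleteSpace E] {f : ℝ → E} {S : Set ℝ} (hS : IsOpen S)
    (hS' : S.OrdConnected) (hf : ContinuousOn f S) {a t : ℝ} (ha : a ∈ S) (ht : t ∈ S) :
    HasDerivAt (fun u => ∫ s in a..u, f s) (f t) t :=
  intervalIntegral.integral_hasDerivAt_right (hf.mono (hS'.uIcc_subset ha ht)).intervalIntegrable
    (hf.stronglyMeasurableAtFilter hS t ht) (hf.continuousAt (hS.mem_nhds ht))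

lemma hasDerivAt_expJ_mul_expK {A θ : ℝ → ℝ} {a ω t : ℝ} (hA : HasDerivAt A a t)
    (hθ : HasDerivAt θ ω t) :
    HasDerivAt (fun s => expJ (A s) * expK (θ s))
      (((ω * sin (2 * A t)) • qi + a • qj + (ω * cos (2 * A t)) • qk) *
        (expJ (A t) * expK (θ t))) t := by
  refine (((hasDerivAt_expJ (A t)).scomp t hA).fun_mul
    ((hasDerivAt_expK (θ t)).scomp t hθ)).congr_deriv ?_
  simp only [Function.comp_apply, mul_smul_comm, ← mul_assoc (expJ (A t)) qk, expJ_mul_qk]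
  simp only [add_mul, smul_mul_assoc, mul_assoc, smul_add, mul_smul]
  abel

theorem caseI_exact_solution
    (S : Set ℝ) (hSopen : IsOpen S) (hSconn : S.OrdConnected)
    (t₀ : ℝ) (ht₀ : t₀ ∈ S)
    (a₁ a₂ a₃ : ℝ → ℝ)
    (ha₂ : ContinuousOn a₂ S) (ha₃ : ContinuousOn a₃ S)
    (A₂ θ₃ : ℝ → ℝ)
    (hA₂ : ∀ t, A₂ t = ∫ s in t₀..t, a₂ s)
    (hcos : ∀ t ∈ S, Real.cos (2 * A₂ t) ≠ 0)
    (ha₁ : ∀ t ∈ S, a₁ t = a₃ t * Real.tan (2 * A₂ t))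
    (hθ₃ : ∀ t, θ₃ t = ∫ s in t₀..t, a₃ s / Real.cos (2 * A₂ s)) :
    (∀ t ∈ S, HasDerivAt (fun s => expJ (A₂ s) * expK (θ₃ s))
        ((a₁ t • qi + a₂ t • qj + a₃ t • qk) * (expJ (A₂ t) * expK (θ₃ t))) t) ∧
      expJ (A₂ t₀) * expK (θ₃ t₀) = 1 := by
  have hA : ∀ t ∈ S, HasDerivAt A₂ (a₂ t) t := fun t ht => by
    rw [funext hA₂]
    exact hasDerivAt_intervalIntegral_of_continuousOn hSopen hSconn ha₂ ht₀ ht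
  have hω : ContinuousOn (fun s => a₃ s / cos (2 * A₂ s)) S :=
    ha₃.div (continuous_cos.comp_continuousOn
      (continuousOn_const.mul fun t ht => (hA t ht).continuousAt.continuousWithinAt)) hcos
  refine ⟨fun t ht => ?_, by simp [hA₂, hθ₃]⟩
  have hθ : HasDerivAt θ₃ (a₃ t / cos (2 * A₂ t)) t := by
    rw [funext hθ₃]
    exact hasDerivAt_intervalIntegral_of_continuousOn hSopen hSconn hω ht₀ ht
  refine (hasDerivAt_expJ_mul_expK (hA t ht) hθ).congr_deriv ?_
  rw [ha₁ t ht, tan_eq_sin_div_cos, div_mul_cancel₀ _ (hcos t ht), div_mul_eq_mul_div,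
    mul_div_assoc]
end
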